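/- arXiv:1611.08270 — 5 statements merged into one kernel-verified Lean document; each statement's English description precedes it below -/
import Mathlib

section
/- Let G be a connected graph with n vertices, m edges, and diameter at most 2. Then S̄₁(G) = 2n(n−1)² − 6m(n−1) + M₁(G), where M₁(G) = Σ_{uv∈E(G)}[d(u)+d(v)] is the first Zagreb index and S̄₁(G) = Σ_{uv∉E(G), u≠v}[σ(u)+σ(v)]. -/
open Finset

noncomputable section

variable {V : Type*}

/-- The status (transmission) of a vertex: sum of distances to all vertices. -/
def status [Fintype V] (G : SimpleGraph V) (u : V) : ℕ :=
  ∑ v, G.dist u v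

/-- The Wiener index: sum of distances over unordered pairs. -/
def wiener [Fintype V] (G : SimpleGraph V) : ℚ :=
  (∑ u, ∑ v, (G.dist u v : ℚ)) / 2

/-- First status connectivity index: sum of σ(u)+σ(v) over edges. -/
def S1 [Fintype V] (G : SimpleGraph V) [DecidableRel G.Adj] : ℚ :=
  (∑ u, ∑ v, if G.Adj u v then ((status G u : ℚ) + status G v) else 0) / 2

/-- Second status connectivity index: sum of σ(u)σ(v) over edges. -/
def S2 [Fintype V] (G : SimpleGraph V) [DecidableRel G.Adj] : ℚ :=
  (∑ u, ∑ v, if G.Adj u v then ((status G u : ℚ) * status G v) else 0) / 2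

/-- First status co-index: sum of σ(u)+σ(v) over non-adjacent distinct pairs. -/
def coS1 [Fintype V] [DecidableEq V] (G : SimpleGraph V) [DecidableRel G.Adj] : ℚ :=
  (∑ u, ∑ v, if u ≠ v ∧ ¬ G.Adj u v then ((status G u : ℚ) + status G v) else 0) / 2

/-- Second status co-index: sum of σ(u)σ(v) over non-adjacent distinct pairs. -/
def coS2 [Fintype V] [DecidableEq V] (G : SimpleGraph V) [DecidableRel G.Adj] : ℚ :=
  (∑ u, ∑ v, if u ≠ v ∧ ¬ G.Adj u v then ((status G u : ℚ) * status G v) else 0) / 2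

/-- First Zagreb index. -/
def M1 [Fintype V] (G : SimpleGraph V) [DecidableRel G.Adj] : ℚ :=
  (∑ u, ∑ v, if G.Adj u v then ((G.degree u : ℚ) + G.degree v) else 0) / 2

/-- Second Zagreb index. -/
def M2 [Fintype V] (G : SimpleGraph V) [DecidableRel G.Adj] : ℚ :=
  (∑ u, ∑ v, if G.Adj u v then ((G.degree u : ℚ) * G.degree v) else 0) / 2

/-- First Zagreb co-index. -/
def coM1 [Fintype V] [DecidableEq V] (G : SimpleGraph V) [DecidableRel G.Adj] : ℚ :=
  (∑ u, ∑ v, if u ≠ v ∧ ¬ G.Adj u v then ((G.degree u : ℚ) + G.degree v) else 0) / 2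

/-- Second Zagreb co-index. -/
def coM2 [Fintype V] [DecidableEq V] (G : SimpleGraph V) [DecidableRel G.Adj] : ℚ :=
  (∑ u, ∑ v, if u ≠ v ∧ ¬ G.Adj u v then ((G.degree u : ℚ) * G.degree v) else 0) / 2

theorem stmt4 [Fintype V] [DecidableEq V] (G : SimpleGraph V) [DecidableRel G.Adj]
    (n m : ℕ) (hn : Fintype.card V = n) (hm : G.edgeFinset.card = m) (hG : G.Connected)
    (hdiam : ∀ u v : V, G.dist u v ≤ 2) :
    coS1 G = 2 * (n : ℚ) * ((n : ℚ) - 1) ^ 2 - 6 * m * ((n : ℚ) - 1) + M1 G := by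
  classical
  -- distance characterization
  have hdist : ∀ u v : V, G.dist u v = if G.Adj u v then 1 else if u = v then 0 else 2 := by
    intro u v
    by_cases h : G.Adj u v
    · simp [h, SimpleGraph.dist_eq_one_iff_adj.mpr h]
    · by_cases he : u = v
      · simp [h, he]
      · have h2 := hdiam u v
        have h0 : G.dist u v ≠ 0 := fun hh => he (hG.dist_eq_zero_iff.mp hh)
        have h1 : G.dist u v ≠ 1 := fun hh => h (SimpleGraph.dist_eq_one_iff_adj.mp hh)
        simp only [h, he, if_false]
        omega
  -- degree as a sum of indicators
  have hdeg : ∀ u : V, (∑ v, if G.Adj u v then (1:ℚ) else 0) = G.degree u := by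
    intro u
    rw [Finset.sum_boole]
    simp [SimpleGraph.degree, SimpleGraph.neighborFinset]
  -- status formula
  have hstat : ∀ u : V, (status G u : ℚ) = 2 * n - 2 - G.degree u := by
    intro u
    have h1 : (status G u : ℚ) = ∑ v, (G.dist u v : ℚ) := by
      simp [status]
    rw [h1]
    have h2 : ∀ v : V, (G.dist u v : ℚ)
        = 2 - (if G.Adj u v then (1:ℚ) else 0) - (if u = v then (2:ℚ) else 0) := by
      intro v
      rw [hdist u v]
      by_cases h : G.Adj u v
      · rw [if_pos h, if_pos h, if_neg (G.ne_of_adj h)]; norm_num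
      · by_cases he : u = v
        · rw [if_neg h, if_pos he, if_neg h, if_pos he]; norm_num
        · rw [if_neg h, if_neg he, if_neg h, if_neg he]; norm_num
    rw [Finset.sum_congr rfl fun v _ => h2 v]
    rw [Finset.sum_sub_distrib, Finset.sum_sub_distrib, hdeg u]
    simp only [Finset.sum_const, Finset.card_univ, hn, nsmul_eq_mul, Finset.sum_ite_eq,
      Finset.mem_univ, if_true]
    ring
  -- count of non-neighbors
  have hcount : ∀ u : V, (∑ v, if u ≠ v ∧ ¬ G.Adj u v then (1:ℚ) else 0)
      = (n : ℚ) - 1 - G.degree u := by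
    intro u
    have h2 : ∀ v : V, (if u ≠ v ∧ ¬ G.Adj u v then (1:ℚ) else 0)
        = 1 - (if G.Adj u v then (1:ℚ) else 0) - (if u = v then (1:ℚ) else 0) := by
      intro v
      by_cases h : G.Adj u v
      · rw [if_neg, if_pos h, if_neg (G.ne_of_adj h)]
        · norm_num
        · rintro ⟨-, hc⟩; exact hc h
      · by_cases he : u = v
        · rw [if_neg, if_neg h, if_pos he]
          · norm_num
          · rintro ⟨hc, -⟩; exact hc he
        · rw [if_pos ⟨he, h⟩, if_neg h, if_neg he]; norm_num
    rw [Finset.sum_congr rfl fun v _ => h2 v]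
    rw [Finset.sum_sub_distrib, Finset.sum_sub_distrib, hdeg u]
    simp only [Finset.sum_const, Finset.card_univ, hn, nsmul_eq_mul, Finset.sum_ite_eq,
      Finset.mem_univ, if_true, mul_one]
    ring
  -- handshake
  have hhand : (∑ u : V, (G.degree u : ℚ)) = 2 * m := by
    have h := G.sum_degrees_eq_twice_card_edges
    rw [hm] at h
    have h2 : ((∑ u : V, G.degree u : ℕ) : ℚ) = ((2 * m : ℕ) : ℚ) := by exact_mod_cast h
    push_cast at h2
    simpa using h2
  -- symmetry of the non-adjacency condition
  have hsymc : ∀ u v : V, (u ≠ v ∧ ¬ G.Adj u v) ↔ (v ≠ u ∧ ¬ G.Adj v u) := by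
    intro u v
    constructor <;> rintro ⟨h1, h2⟩ <;> exact ⟨h1.symm, fun h => h2 h.symm⟩
  -- reduce coS1
  have key : ∀ (f : V → ℚ), (∑ u, ∑ v, if u ≠ v ∧ ¬ G.Adj u v then (f u + f v) else 0)
      = 2 * ∑ u, f u * ((n : ℚ) - 1 - G.degree u) := by
    intro f
    have split : ∀ u v : V, (if u ≠ v ∧ ¬ G.Adj u v then (f u + f v) else 0)
        = (if u ≠ v ∧ ¬ G.Adj u v then f u else 0) + (if u ≠ v ∧ ¬ G.Adj u v then f v else 0) := by
      intro u v; by_cases h : u ≠ v ∧ ¬ G.Adj u v <;> simp [h]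
    simp only [split, Finset.sum_add_distrib]
    have hswap : (∑ u, ∑ v, if u ≠ v ∧ ¬ G.Adj u v then f v else 0)
        = ∑ u, ∑ v, if u ≠ v ∧ ¬ G.Adj u v then f u else 0 := by
      rw [Finset.sum_comm]
      refine Finset.sum_congr rfl fun u _ => Finset.sum_congr rfl fun v _ => ?_
      exact if_congr (hsymc v u) rfl rfl
    rw [hswap]
    have hone : ∀ u : V, (∑ v, if u ≠ v ∧ ¬ G.Adj u v then f u else 0)
        = f u * ((n : ℚ) - 1 - G.degree u) := by
      intro u
      have e1 : (∑ v, if u ≠ v ∧ ¬ G.Adj u v then f u else 0)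
          = f u * ∑ v, if u ≠ v ∧ ¬ G.Adj u v then (1:ℚ) else 0 := by
        rw [Finset.mul_sum]
        refine Finset.sum_congr rfl fun v _ => ?_
        by_cases h : u ≠ v ∧ ¬ G.Adj u v <;> simp [h]
      rw [e1, hcount u]
    simp only [hone]
    ring
  -- M1 = sum of squared degrees
  have hM1 : M1 G = ∑ u : V, (G.degree u : ℚ) ^ 2 := by
    unfold M1
    have split : ∀ u v : V, (if G.Adj u v then ((G.degree u : ℚ) + G.degree v) else 0)
        = (if G.Adj u v then (G.degree u : ℚ) else 0)
          + (if G.Adj u v then (G.degree v : ℚ) else 0) := by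
      intro u v; by_cases h : G.Adj u v <;> simp [h]
    simp only [split, Finset.sum_add_distrib]
    have hswap : (∑ u, ∑ v, if G.Adj u v then (G.degree v : ℚ) else 0)
        = ∑ u, ∑ v, if G.Adj u v then (G.degree u : ℚ) else 0 := by
      rw [Finset.sum_comm]
      refine Finset.sum_congr rfl fun u _ => Finset.sum_congr rfl fun v _ => ?_
      exact if_congr (G.adj_comm v u) rfl rfl
    rw [hswap]
    have hone : ∀ u : V, (∑ v, if G.Adj u v then (G.degree u : ℚ) else 0)
        = (G.degree u : ℚ) ^ 2 := by
      intro u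
      have e1 : (∑ v, if G.Adj u v then (G.degree u : ℚ) else 0)
          = (G.degree u : ℚ) * ∑ v, if G.Adj u v then (1:ℚ) else 0 := by
        rw [Finset.mul_sum]
        refine Finset.sum_congr rfl fun v _ => ?_
        by_cases h : G.Adj u v <;> simp [h]
      rw [e1, hdeg u]; ring
    simp only [hone]
    ring
  -- put it together
  have hco : coS1 G = ∑ u : V, (2 * (n:ℚ) - 2 - G.degree u) * ((n:ℚ) - 1 - G.degree u) := by
    unfold coS1
    rw [key (fun u => (status G u : ℚ))]
    simp only [hstat]
    ring
  rw [hco, hM1]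
  have expand : ∀ u : V, (2 * (n:ℚ) - 2 - G.degree u) * ((n:ℚ) - 1 - G.degree u)
      = 2 * ((n:ℚ) - 1) ^ 2 - 3 * ((n:ℚ) - 1) * G.degree u + (G.degree u : ℚ) ^ 2 := by
    intro u; ring
  rw [Finset.sum_congr rfl fun u _ => expand u]
  rw [Finset.sum_add_distrib, Finset.sum_sub_distrib, Finset.sum_const, Finset.card_univ, hn,
    ← Finset.mul_sum, hhand]
  simp only [nsmul_eq_mul]
  ring
end
end

section
/- Let G be a connected graph with n vertices, m edges, and diameter at most 2. Then S̄₂(G) = (n−1)²[2n(n−1) − 8m] + 2m² + (2n − 5/2)·M₁(G) − M₂(G), where M₂(G) = Σ_{uv∈E(G)} d(u)d(v). -/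
open Finset

noncomputable section

variable {V : Type*}

theorem stmt5 [Fintype V] [DecidableEq V] (G : SimpleGraph V) [DecidableRel G.Adj]
    (n m : ℕ) (hn : Fintype.card V = n) (hm : G.edgeFinset.card = m) (hG : G.Connected)
    (hdiam : ∀ u v : V, G.dist u v ≤ 2) :
    coS2 G = ((n : ℚ) - 1) ^ 2 * (2 * (n : ℚ) * ((n : ℚ) - 1) - 8 * m) + 2 * (m : ℚ) ^ 2
      + (2 * (n : ℚ) - 5 / 2) * M1 G - M2 G := by
  classical
  -- abbreviations
  set d : V → ℚ := fun u => (G.degree u : ℚ) with hd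
  set c : ℚ := 2 * ((n : ℚ) - 1) with hc
  -- degree as a sum of indicators
  have hdeg : ∀ u : V, d u = ∑ v, (if G.Adj u v then (1:ℚ) else 0) := by
    intro u
    have h1 : G.degree u = #(Finset.univ.filter (G.Adj u)) := by
      rw [← SimpleGraph.neighborFinset_eq_filter]; rfl
    rw [hd]; simp only [h1, Finset.sum_boole]
  -- handshake
  have hsum_d : ∑ u, d u = 2 * (m : ℚ) := by
    have := G.sum_degrees_eq_twice_card_edges
    rw [hm] at this
    calc ∑ u, d u = ((∑ u, G.degree u : ℕ) : ℚ) := by push_cast; rfl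
      _ = 2 * (m : ℚ) := by rw [this]; push_cast; ring
  -- distance formula for diameter ≤ 2
  have hdist : ∀ u v : V, (G.dist u v : ℚ)
      = 2 - (if u = v then 2 else 0) - (if G.Adj u v then 1 else 0) := by
    intro u v
    by_cases h1 : u = v
    · subst h1; simp [SimpleGraph.dist_self]
    · by_cases h2 : G.Adj u v
      · have : G.dist u v = 1 := SimpleGraph.dist_eq_one_iff_adj.mpr h2
        rw [this]; simp [h1, h2]; norm_num
      · have hle := hdiam u v
        have hpos : 0 < G.dist u v := hG.pos_dist_of_ne h1
        have hne1 : G.dist u v ≠ 1 := fun h => h2 (SimpleGraph.dist_eq_one_iff_adj.mp h)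
        have h22 : G.dist u v = 2 := by omega
        simp [h22, h1, h2]
  -- status formula
  have hstat : ∀ u : V, (status G u : ℚ) = c - d u := by
    intro u
    rw [status, Nat.cast_sum]
    simp only [hdist]
    rw [Finset.sum_sub_distrib, Finset.sum_sub_distrib, Finset.sum_const,
      Finset.sum_ite_eq, ← hdeg u]
    simp [Finset.card_univ, hn, hc]
    ring
  set P : ℚ := ∑ u, d u ^ 2 with hP
  set Q : ℚ := ∑ u, ∑ v, (if G.Adj u v then d u * d v else 0) with hQ
  have hpull : ∀ (x : ℚ) (p : Prop) [Decidable p],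
      (if p then x else 0) = x * (if p then 1 else 0) := by
    intro x p _; split <;> simp
  -- adjacency indicator sums
  have hA1 : ∀ u, ∑ v, (if G.Adj u v then d u else 0) = d u ^ 2 := by
    intro u
    simp only [hpull (d u), ← Finset.mul_sum, ← hdeg u]; ring
  have hone : ∑ u, ∑ v, (if G.Adj u v then (1:ℚ) else 0) = 2 * (m : ℚ) := by
    rw [← hsum_d]; exact Finset.sum_congr rfl fun u _ => (hdeg u).symm
  have h1 : ∑ u, ∑ v, (if G.Adj u v then d u else 0) = P := by
    exact Finset.sum_congr rfl fun u _ => hA1 u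
  have h2 : ∑ u, ∑ v, (if G.Adj u v then d v else 0) = P := by
    rw [Finset.sum_comm]
    refine Finset.sum_congr rfl fun v _ => ?_
    rw [← hA1 v]
    exact Finset.sum_congr rfl fun u _ => if_congr (G.adj_comm u v) rfl rfl
  have hcst : ∑ u, ∑ v, (if G.Adj u v then c * c else 0) = c * c * (2 * m) := by
    simp only [hpull (c * c), ← Finset.mul_sum]
    rw [hone]
  -- M1 and M2
  have hM1 : M1 G = P := by
    rw [M1]
    have : ∀ u v : V, (if G.Adj u v then d u + d v else 0)
        = (if G.Adj u v then d u else 0) + (if G.Adj u v then d v else 0) := by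
      intro u v; split <;> simp
    simp only [hd] at this ⊢
    simp only [this, Finset.sum_add_distrib]
    simp only [hd] at h1 h2
    rw [h1, h2]; ring
  have hM2 : M2 G = Q / 2 := by rw [M2, hQ]
  -- decompose the coindex sum
  have key : ∀ f : V → V → ℚ,
      ∑ u, ∑ v, (if u ≠ v ∧ ¬ G.Adj u v then f u v else 0)
      = (∑ u, ∑ v, f u v) - (∑ u, f u u)
        - ∑ u, ∑ v, (if G.Adj u v then f u v else 0) := by
    intro f
    have hpt : ∀ u v, (if u ≠ v ∧ ¬ G.Adj u v then f u v else 0)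
        = f u v - (if u = v then f u v else 0) - (if G.Adj u v then f u v else 0) := by
      intro u v
      by_cases hh : u = v
      · subst hh; simp
      · by_cases ha : G.Adj u v <;> simp [hh, ha]
    simp only [hpt, Finset.sum_sub_distrib, Finset.sum_ite_eq, Finset.mem_univ, if_pos]
  -- compute the three pieces with σ = c - d
  have hT : ∑ u, ∑ v, ((status G u : ℚ) * (status G v : ℚ))
      = ((n : ℚ) * c - 2 * m) * ((n : ℚ) * c - 2 * m) := by
    simp only [hstat]
    rw [← Finset.sum_mul_sum]
    rw [Finset.sum_sub_distrib, Finset.sum_const, hsum_d]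
    simp [Finset.card_univ, hn]
  have hDg : ∑ u, ((status G u : ℚ) * (status G u : ℚ))
      = (n : ℚ) * c ^ 2 - 2 * c * (2 * m) + P := by
    have hpt : ∀ u, (status G u : ℚ) * (status G u : ℚ)
        = c ^ 2 - (2 * c) * d u + d u ^ 2 := by
      intro u; rw [hstat u]; ring
    simp only [hpt]
    rw [Finset.sum_add_distrib, Finset.sum_sub_distrib, Finset.sum_const,
      ← Finset.mul_sum, hsum_d, hP]
    simp [Finset.card_univ, hn]
  have hE : ∑ u, ∑ v, (if G.Adj u v then (status G u : ℚ) * (status G v : ℚ) else 0)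
      = c * c * (2 * m) - 2 * c * P + Q := by
    have hpt : ∀ u v, (if G.Adj u v then (status G u : ℚ) * (status G v : ℚ) else 0)
        = (if G.Adj u v then c * c else 0) - (if G.Adj u v then c * d v else 0)
          - (if G.Adj u v then d u * c else 0) + (if G.Adj u v then d u * d v else 0) := by
      intro u v
      split
      · rw [hstat u, hstat v]; ring
      · simp
    simp only [hpt, Finset.sum_add_distrib, Finset.sum_sub_distrib]
    have e1 : ∑ u, ∑ v, (if G.Adj u v then c * d v else 0) = c * P := by
      have : ∀ u v, (if G.Adj u v then c * d v else 0)
          = c * (if G.Adj u v then d v else 0) := by intro u v; split <;> simp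
      simp only [this, ← Finset.mul_sum, h2]
    have e2 : ∑ u, ∑ v, (if G.Adj u v then d u * c else 0) = c * P := by
      have : ∀ u v, (if G.Adj u v then d u * c else 0)
          = c * (if G.Adj u v then d u else 0) := by intro u v; split <;> simp [mul_comm]
      simp only [this, ← Finset.mul_sum, h1]
    rw [hcst, e1, e2, ← hQ]
    ring
  -- put it all together
  rw [coS2, key, hT, hDg, hE, hM1, hM2, hc]
  ring
end
end

section
/- Let G be a connected graph with n vertices, m edges, and diameter at most 2. Then S̄₂(G) = 2(n−1)²[n(n−1) − 2m] − 2(n−1)·M̄₁(G) + M̄₂(G), where M̄₂(G) = Σ_{uv∉E(G), u≠v} d(u)d(v) is the second Zagreb co-index. -/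
open Finset

noncomputable section

variable {V : Type*}

theorem stmt7 [Fintype V] [DecidableEq V] (G : SimpleGraph V) [DecidableRel G.Adj]
    (n m : ℕ) (hn : Fintype.card V = n) (hm : G.edgeFinset.card = m) (hG : G.Connected)
    (hdiam : ∀ u v : V, G.dist u v ≤ 2) :
    coS2 G = 2 * ((n : ℚ) - 1) ^ 2 * ((n : ℚ) * ((n : ℚ) - 1) - 2 * m)
      - 2 * ((n : ℚ) - 1) * coM1 G + coM2 G := by
  classical
  have hdeg : ∀ u : V, (G.degree u : ℚ) = ∑ v, if G.Adj u v then (1:ℚ) else 0 := by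
    intro u
    rw [Finset.sum_boole]
    congr 1
    rw [← SimpleGraph.neighborFinset_eq_filter]
    rfl
  have hstat : ∀ u : V, (status G u : ℚ) = 2 * ((n:ℚ) - 1) - G.degree u := by
    intro u
    have hdist : ∀ v : V, (G.dist u v : ℚ)
        = 2 - (if u = v then (2:ℚ) else 0) - (if G.Adj u v then (1:ℚ) else 0) := by
      intro v
      by_cases h : u = v
      · subst h; simp [SimpleGraph.dist_self, G.irrefl]
      · by_cases ha : G.Adj u v
        · rw [SimpleGraph.dist_eq_one_iff_adj.mpr ha]; simp [h, ha]; norm_num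
        · have h2 : G.dist u v = 2 := by
            have hle := hdiam u v
            have h0 : 0 < G.dist u v := hG.pos_dist_of_ne h
            have h1 : G.dist u v ≠ 1 := fun hh => ha (SimpleGraph.dist_eq_one_iff_adj.mp hh)
            omega
          rw [h2]; simp [h, ha]
    unfold status
    push_cast
    rw [Finset.sum_congr rfl (fun v _ => hdist v)]
    rw [Finset.sum_sub_distrib, Finset.sum_sub_distrib, ← hdeg u]
    simp [Finset.sum_ite_eq, ← hn, Finset.card_univ]
    ring
  have hdegsum : ∑ u, (G.degree u : ℚ) = 2 * m := by
    have := G.sum_degrees_eq_twice_card_edges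
    rw [hm] at this
    have h2 : ((∑ v, G.degree v : ℕ) : ℚ) = ((2 * m : ℕ) : ℚ) := by rw [this]
    push_cast at h2
    exact h2
  have hN : ∑ u, ∑ v, (if u ≠ v ∧ ¬ G.Adj u v then (1:ℚ) else 0)
      = (n:ℚ) * ((n:ℚ) - 1) - 2 * m := by
    have inner : ∀ u : V, ∑ v, (if u ≠ v ∧ ¬ G.Adj u v then (1:ℚ) else 0)
        = ((n:ℚ) - 1) - G.degree u := by
      intro u
      have h1 : ∀ v : V, (if u ≠ v ∧ ¬ G.Adj u v then (1:ℚ) else 0)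
          = 1 - (if u = v then (1:ℚ) else 0) - (if G.Adj u v then (1:ℚ) else 0) := by
        intro v
        by_cases h : u = v
        · subst h; simp [G.irrefl]
        · by_cases ha : G.Adj u v <;> simp [h, ha]
      rw [Finset.sum_congr rfl (fun v _ => h1 v)]
      rw [Finset.sum_sub_distrib, Finset.sum_sub_distrib, ← hdeg u]
      simp [Finset.sum_ite_eq, ← hn, Finset.card_univ]
    rw [Finset.sum_congr rfl (fun u _ => inner u), Finset.sum_sub_distrib, hdegsum]
    simp only [Finset.sum_const, Finset.card_univ, hn, nsmul_eq_mul]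
  have key : ∀ u v : V, (if u ≠ v ∧ ¬ G.Adj u v then (status G u : ℚ) * status G v else 0)
      = 4 * ((n:ℚ) - 1) ^ 2 * (if u ≠ v ∧ ¬ G.Adj u v then (1:ℚ) else 0)
        - 2 * ((n:ℚ) - 1) * (if u ≠ v ∧ ¬ G.Adj u v then ((G.degree u : ℚ) + G.degree v) else 0)
        + (if u ≠ v ∧ ¬ G.Adj u v then ((G.degree u : ℚ) * G.degree v) else 0) := by
    intro u v
    by_cases h : u ≠ v ∧ ¬ G.Adj u v
    · rw [if_pos h, if_pos h, if_pos h, if_pos h, hstat u, hstat v]; ring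
    · simp [h]
  unfold coS2 coM1 coM2
  rw [Finset.sum_congr rfl (fun u _ => Finset.sum_congr rfl (fun v _ => key u v))]
  simp only [Finset.sum_add_distrib, Finset.sum_sub_distrib, ← Finset.mul_sum]
  rw [hN]
  ring
end
end

section
/- Let G be a graph on n vertices with m edges whose complement Ḡ is connected. Then S₁(Ḡ) ≥ (n−1)[n(n−1) − 2m] + M̄₁(G), with equality if and only if Ḡ has diameter at most 2. Here S₁(Ḡ) = Σ_{uv∈E(Ḡ)}[σ_{Ḡ}(u)+σ_{Ḡ}(v)] and M̄₁(G) = Σ_{uv∉E(G), u≠v}[d_G(u)+d_G(v)]. -/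
open Finset

noncomputable section

variable {V : Type*}

lemma key1 [Fintype V] [DecidableEq V] {H : SimpleGraph V} [DecidableRel H.Adj] (hG : H.Connected) (u v : V) :
    (if v = u then 0 else 2) ≤ H.dist u v + (if H.Adj u v then 1 else 0) ∧
    ((if v = u then 0 else 2) = H.dist u v + (if H.Adj u v then 1 else 0) ↔ H.dist u v ≤ 2) := by
  by_cases hvu : v = u
  · subst hvu; simp [SimpleGraph.dist_self, H.irrefl]
  by_cases hadj : H.Adj u v
  · have h1 : H.dist u v = 1 := SimpleGraph.dist_eq_one_iff_adj.mpr hadj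
    simp [hvu, hadj, h1]
  · have h2 : 2 ≤ H.dist u v := by
      have hr : H.Reachable u v := hG.preconnected u v
      have h0 : 0 < H.dist u v := hr.pos_dist_of_ne (fun h => hvu h.symm)
      have h1 : H.dist u v ≠ 1 := fun h => hadj (SimpleGraph.dist_eq_one_iff_adj.mp h)
      omega
    simp only [hvu, hadj, if_neg, if_false, add_zero]
    omega

lemma key2 [Fintype V] [DecidableEq V] {H : SimpleGraph V} [DecidableRel H.Adj]
    (hG : H.Connected) (u : V) :
    2 * (Fintype.card V - 1) ≤ status H u + H.degree u ∧
    (2 * (Fintype.card V - 1) = status H u + H.degree u ↔ ∀ v, H.dist u v ≤ 2) := by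
  have hdeg : H.degree u = ∑ v, (if H.Adj u v then 1 else 0) := by
    rw [SimpleGraph.degree, SimpleGraph.neighborFinset_eq_filter, Finset.card_filter]
  have hsum : status H u + H.degree u = ∑ v, (H.dist u v + (if H.Adj u v then 1 else 0)) := by
    rw [status, hdeg, Finset.sum_add_distrib]
  have hS0 : ∑ v : V, (if v = u then 0 else 2) = 2 * (Fintype.card V - 1) := by
    have h1 : ∑ v : V, ((if v = u then 0 else 2) + (if v = u then 2 else 0)) = 2 * Fintype.card V := by
      have : ∀ v : V, (if v = u then 0 else 2) + (if v = u then 2 else 0) = 2 := by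
        intro v; split <;> rfl
      simp only [this, Finset.sum_const, Finset.card_univ, smul_eq_mul, mul_comm]
    rw [Finset.sum_add_distrib] at h1
    have h2 : ∑ v : V, (if v = u then 2 else 0) = 2 := by
      rw [Finset.sum_ite_eq' Finset.univ u (fun _ => 2)]; simp
    have hc : 1 ≤ Fintype.card V := Fintype.card_pos_iff.mpr ⟨u⟩
    omega
  constructor
  · rw [hsum, ← hS0]
    exact Finset.sum_le_sum (fun v _ => (key1 hG u v).1)
  · rw [hsum, ← hS0,
      Finset.sum_eq_sum_iff_of_le (fun v _ => (key1 hG u v).1)]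
    constructor
    · intro h v; exact ((key1 hG u v).2).mp (h v (Finset.mem_univ v))
    · intro h v _; exact ((key1 hG u v).2).mpr (h v)

theorem stmt9 [Fintype V] [DecidableEq V] (G : SimpleGraph V) [DecidableRel G.Adj]
    (n m : ℕ) (hn : Fintype.card V = n) (hm : G.edgeFinset.card = m)
    (hG : Gᶜ.Connected) :
    S1 Gᶜ ≥ ((n : ℚ) - 1) * ((n : ℚ) * ((n : ℚ) - 1) - 2 * m) + coM1 G ∧
      (S1 Gᶜ = ((n : ℚ) - 1) * ((n : ℚ) * ((n : ℚ) - 1) - 2 * m) + coM1 G ↔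
        ∀ u v : V, Gᶜ.dist u v ≤ 2) := by
  classical
  have hne : Nonempty V := hG.nonempty
  have hn1 : 1 ≤ n := by rw [← hn]; exact Fintype.card_pos
  set D : V → ℚ := fun u => ((status Gᶜ u : ℚ) + (Gᶜ.degree u : ℚ)) - 2*((n:ℚ)-1) with hDdef
  have hcast : ((2*(Fintype.card V - 1) : ℕ) : ℚ) = 2*((n:ℚ)-1) := by
    rw [hn, Nat.cast_mul, Nat.cast_sub hn1]; push_cast; ring
  have hD0 : ∀ u, 0 ≤ D u := by
    intro u
    have h := (key2 hG u).1
    have h2 : ((2*(Fintype.card V - 1) : ℕ) : ℚ) ≤ ((status Gᶜ u + Gᶜ.degree u : ℕ) : ℚ) :=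
      Nat.cast_le.mpr h
    rw [hcast] at h2; push_cast at h2; simp only [hDdef]; linarith
  have hDeq : ∀ u, D u = 0 ↔ ∀ v, Gᶜ.dist u v ≤ 2 := by
    intro u
    rw [← (key2 hG u).2]
    constructor
    · intro h
      have h2 : ((2*(Fintype.card V - 1) : ℕ) : ℚ) = ((status Gᶜ u + Gᶜ.degree u : ℕ) : ℚ) := by
        rw [hcast]; push_cast; simp only [hDdef] at h; linarith
      exact_mod_cast h2
    · intro h
      simp only [hDdef]
      have h2 : ((2*(Fintype.card V - 1) : ℕ) : ℚ) = ((status Gᶜ u + Gᶜ.degree u : ℕ) : ℚ) :=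
        congrArg _ h
      rw [hcast] at h2; push_cast at h2; linarith
  have hdegc : ∀ u, (Gᶜ.degree u : ℚ) = ((n:ℚ)-1) - G.degree u := by
    intro u
    have h1 : Gᶜ.degree u = Fintype.card V - 1 - G.degree u := by
      convert SimpleGraph.degree_compl G u using 2
    have h2 : G.degree u < Fintype.card V := G.degree_lt_card_verts u
    rw [hn] at h1 h2
    have h3 : G.degree u ≤ n - 1 := by omega
    rw [h1, Nat.cast_sub h3, Nat.cast_sub hn1]; push_cast; ring
  have hhs : ∑ u, (G.degree u : ℚ) = 2 * m := by
    have h1 := G.sum_degrees_eq_twice_card_edges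
    rw [hm] at h1
    have h2 : ((∑ u, G.degree u : ℕ) : ℚ) = ((2 * m : ℕ) : ℚ) := congrArg _ h1
    push_cast at h2; exact h2
  have hind : ∀ u, ∑ v, (if Gᶜ.Adj u v then (1:ℚ) else 0) = (Gᶜ.degree u : ℚ) := by
    intro u
    rw [Finset.sum_boole]
    congr 1
    rw [SimpleGraph.degree, SimpleGraph.neighborFinset_eq_filter]
  have hedges : ∑ u, ∑ v, (if Gᶜ.Adj u v then (1:ℚ) else 0) = (n:ℚ)*((n:ℚ)-1) - 2*m := by
    simp only [hind]
    rw [Finset.sum_congr rfl (fun u _ => hdegc u), Finset.sum_sub_distrib,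
      Finset.sum_const, Finset.card_univ, hn, hhs, nsmul_eq_mul]
  have hsplit : ∀ u v : V,
      (if Gᶜ.Adj u v then ((status Gᶜ u : ℚ) + status Gᶜ v) else 0)
    = (if Gᶜ.Adj u v then (D u + D v) else 0)
    + 2*((n:ℚ)-1) * (if Gᶜ.Adj u v then (1:ℚ) else 0)
    + (if u ≠ v ∧ ¬ G.Adj u v then ((G.degree u : ℚ) + G.degree v) else 0) := by
    intro u v
    have hc : Gᶜ.Adj u v ↔ (u ≠ v ∧ ¬ G.Adj u v) := G.compl_adj u v
    by_cases h : Gᶜ.Adj u v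
    · rw [if_pos h, if_pos h, if_pos h, if_pos (hc.mp h)]
      simp only [hDdef]
      rw [hdegc u, hdegc v]; ring
    · rw [if_neg h, if_neg h, if_neg h, if_neg (fun hc' => h (hc.mpr hc'))]; ring
  have hS1 : S1 Gᶜ = (∑ u, ∑ v, (if Gᶜ.Adj u v then (D u + D v) else 0))/2
      + ((n:ℚ)-1)*((n:ℚ)*((n:ℚ)-1) - 2*m) + coM1 G := by
    rw [S1]
    have h1 : ∑ u, ∑ v, (if Gᶜ.Adj u v then ((status Gᶜ u : ℚ) + status Gᶜ v) else 0)
      = (∑ u, ∑ v, (if Gᶜ.Adj u v then (D u + D v) else 0))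
        + 2*((n:ℚ)-1) * (∑ u, ∑ v, (if Gᶜ.Adj u v then (1:ℚ) else 0))
        + ∑ u, ∑ v, (if u ≠ v ∧ ¬ G.Adj u v then ((G.degree u:ℚ) + G.degree v) else 0) := by
      simp only [hsplit, Finset.sum_add_distrib, Finset.mul_sum]
    rw [h1, hedges, coM1]; ring
  have hinner : ∀ u, ∀ v ∈ Finset.univ, (0:ℚ) ≤ (if Gᶜ.Adj u v then (D u + D v) else 0) := by
    intro u v _
    split
    · exact add_nonneg (hD0 _) (hD0 _)
    · exact le_refl 0
  have hSDnn : 0 ≤ ∑ u, ∑ v, (if Gᶜ.Adj u v then (D u + D v) else 0) :=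
    Finset.sum_nonneg fun u _ => Finset.sum_nonneg (hinner u)
  constructor
  · rw [hS1]; linarith
  · rw [hS1]
    constructor
    · intro h
      have hzero : ∑ u, ∑ v, (if Gᶜ.Adj u v then (D u + D v) else 0) = 0 := by linarith
      rw [Finset.sum_eq_zero_iff_of_nonneg
        (fun u _ => Finset.sum_nonneg (hinner u))] at hzero
      have hpt : ∀ u v, Gᶜ.Adj u v → D u = 0 := by
        intro u v huv
        have h1 := hzero u (Finset.mem_univ u)
        rw [Finset.sum_eq_zero_iff_of_nonneg (hinner u)] at h1
        have h2 := h1 v (Finset.mem_univ v)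
        rw [if_pos huv] at h2
        have := hD0 u; have := hD0 v; linarith
      intro u v
      by_cases huv : u = v
      · subst huv; simp [SimpleGraph.dist_self]
      · obtain ⟨p⟩ := hG.preconnected u v
        have hadj : Gᶜ.Adj u (p.getVert 1) :=
          p.adj_snd (SimpleGraph.Walk.not_nil_of_ne huv)
        exact (hDeq u).mp (hpt u _ hadj) v
    · intro h
      have hz : ∀ u, D u = 0 := fun u => (hDeq u).mpr (fun v => h u v)
      have hzz : ∑ u, ∑ v, (if Gᶜ.Adj u v then (D u + D v) else 0) = 0 := by
        simp [hz]
      rw [hzz]; ring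
end
end

section
/- Let G be a graph on n vertices with m edges whose complement Ḡ is connected. Then S₂(Ḡ) ≥ (n−1)²[n(n−1)/2 − m] + (n−1)·M̄₁(G) + M̄₂(G), with equality if and only if Ḡ has diameter at most 2. -/
open Finset

noncomputable section

variable {V : Type*}

lemma statusKey [Fintype V] [DecidableEq V] (G : SimpleGraph V) [DecidableRel G.Adj]
    (hG : Gᶜ.Connected) (u : V) :
    ((Fintype.card V : ℚ) - 1) + G.degree u ≤ status Gᶜ u ∧
    ((((Fintype.card V : ℚ) - 1) + G.degree u = status Gᶜ u) ↔ ∀ v, Gᶜ.dist u v ≤ 2) := by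
  classical
  set h : V → ℚ := fun v => if v = u then 0 else if Gᶜ.Adj u v then 1 else 2 with hh
  have hle : ∀ v ∈ univ, h v ≤ (Gᶜ.dist u v : ℚ) := by
    intro v _
    by_cases hv : v = u
    · subst hv; simp [hh, SimpleGraph.dist_self]
    · by_cases ha : Gᶜ.Adj u v
      · have hd : Gᶜ.dist u v = 1 := SimpleGraph.dist_eq_one_iff_adj.mpr ha
        simp only [hh, hd]
        rw [if_neg hv, if_pos ha]
        norm_num
      · have h1 : 0 < Gᶜ.dist u v := hG.pos_dist_of_ne (Ne.symm hv)
        have h2 : Gᶜ.dist u v ≠ 1 := fun hc => ha (SimpleGraph.dist_eq_one_iff_adj.mp hc)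
        have : 2 ≤ Gᶜ.dist u v := by omega
        simp only [hh]
        rw [if_neg hv, if_neg ha]
        exact_mod_cast this
  have hsum : ∑ v, h v = ((Fintype.card V : ℚ) - 1) + G.degree u := by
    have : ∀ v, h v = ((2:ℚ) - if v = u then 2 else 0) - (if Gᶜ.Adj u v then 1 else 0) := by
      intro v
      by_cases hv : v = u
      · subst hv
        simp only [hh]
        rw [if_neg (Gᶜ.irrefl)]
        simp
      · simp only [hh]
        rw [if_neg hv, if_neg hv]
        by_cases ha : Gᶜ.Adj u v
        · rw [if_pos ha, if_pos ha]; norm_num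
        · rw [if_neg ha, if_neg ha]; norm_num
    rw [Finset.sum_congr rfl fun v _ => this v]
    rw [Finset.sum_sub_distrib, Finset.sum_sub_distrib]
    have e1 : ∑ v : V, (2:ℚ) = 2 * Fintype.card V := by
      simp [mul_comm]
    have e2 : ∑ v : V, (if v = u then (2:ℚ) else 0) = 2 := by simp
    have e3 : ∑ v : V, (if Gᶜ.Adj u v then (1:ℚ) else 0) = Gᶜ.degree u := by
      rw [Finset.sum_boole]
      congr 1
      rw [SimpleGraph.degree]
      congr 1
      ext v; simp [SimpleGraph.mem_neighborFinset]
    rw [e1, e2, e3]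
    have hdc : Gᶜ.degree u = Fintype.card V - 1 - G.degree u := SimpleGraph.degree_compl (G := G) (v := u)
    have hdl : G.degree u ≤ Fintype.card V - 1 := by
      have := G.degree_lt_card_verts u; omega
    have : (Gᶜ.degree u : ℚ) = (Fintype.card V : ℚ) - 1 - G.degree u := by
      rw [hdc]
      have : Nonempty V := hG.nonempty
      have h1 : (1:ℕ) ≤ Fintype.card V := Fintype.card_pos
      push_cast [Nat.cast_sub hdl, Nat.cast_sub h1]
      ring
    rw [this]; ring
  have hstat : (status Gᶜ u : ℚ) = ∑ v, (Gᶜ.dist u v : ℚ) := by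
    simp [status]
  constructor
  · rw [hstat, ← hsum]; exact Finset.sum_le_sum hle
  · rw [hstat, ← hsum]
    rw [Finset.sum_eq_sum_iff_of_le hle]
    constructor
    · intro H v
      by_cases hv : v = u
      · subst hv; simp [SimpleGraph.dist_self]
      · by_cases ha : Gᶜ.Adj u v
        · rw [SimpleGraph.dist_eq_one_iff_adj.mpr ha]; norm_num
        · have := H v (mem_univ v)
          simp only [hh] at this
          rw [if_neg hv, if_neg ha] at this
          have : (Gᶜ.dist u v : ℚ) = 2 := this.symm
          have : Gᶜ.dist u v = 2 := by exact_mod_cast this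
          omega
    · intro H v _
      by_cases hv : v = u
      · subst hv; simp [hh, SimpleGraph.dist_self]
      · by_cases ha : Gᶜ.Adj u v
        · simp only [hh]
          rw [if_neg hv, if_pos ha, SimpleGraph.dist_eq_one_iff_adj.mpr ha]
          norm_num
        · have h1 : 0 < Gᶜ.dist u v := hG.pos_dist_of_ne (Ne.symm hv)
          have h2 : Gᶜ.dist u v ≠ 1 := fun hc => ha (SimpleGraph.dist_eq_one_iff_adj.mp hc)
          have h3 := H v
          have : Gᶜ.dist u v = 2 := by omega
          simp only [hh]
          rw [if_neg hv, if_neg ha, this]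
          norm_num

lemma ite_adj_sum_eq [Fintype V] [DecidableEq V] (G : SimpleGraph V) [DecidableRel G.Adj]
    (u : V) : ∑ v : V, (if Gᶜ.Adj u v then (1:ℚ) else 0) = Gᶜ.degree u := by
  rw [Finset.sum_boole]
  congr 1
  rw [SimpleGraph.degree]
  congr 1
  ext v; simp [SimpleGraph.mem_neighborFinset]

lemma degree_compl_cast [Fintype V] [DecidableEq V] [Nonempty V] (G : SimpleGraph V)
    [DecidableRel G.Adj] (u : V) :
    (Gᶜ.degree u : ℚ) = (Fintype.card V : ℚ) - 1 - G.degree u := by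
  have hdc : Gᶜ.degree u = Fintype.card V - 1 - G.degree u :=
    SimpleGraph.degree_compl (G := G) (v := u)
  have hdl : G.degree u ≤ Fintype.card V - 1 := by
    have := G.degree_lt_card_verts u; omega
  have h1 : (1:ℕ) ≤ Fintype.card V := Fintype.card_pos
  rw [hdc]
  push_cast [Nat.cast_sub hdl, Nat.cast_sub h1]
  ring

theorem stmt10 [Fintype V] [DecidableEq V] (G : SimpleGraph V) [DecidableRel G.Adj]
    (n m : ℕ) (hn : Fintype.card V = n) (hm : G.edgeFinset.card = m)
    (hG : Gᶜ.Connected) :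
    S2 Gᶜ ≥ ((n : ℚ) - 1) ^ 2 * ((n : ℚ) * ((n : ℚ) - 1) / 2 - m)
        + ((n : ℚ) - 1) * coM1 G + coM2 G ∧
      (S2 Gᶜ = ((n : ℚ) - 1) ^ 2 * ((n : ℚ) * ((n : ℚ) - 1) / 2 - m)
        + ((n : ℚ) - 1) * coM1 G + coM2 G ↔ ∀ u v : V, Gᶜ.dist u v ≤ 2) := by
  classical
  subst hn; subst hm
  have hne : Nonempty V := hG.nonempty
  set c : ℚ := (Fintype.card V : ℚ) - 1 with hc
  set F : V → ℚ := fun u => c + G.degree u with hF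
  have hkey := fun u => statusKey G hG u
  have hF0 : ∀ u, 0 ≤ F u := by
    intro u
    have h1 : (1:ℕ) ≤ Fintype.card V := Fintype.card_pos
    have : (1:ℚ) ≤ (Fintype.card V : ℚ) := by exact_mod_cast h1
    have : 0 ≤ c := by rw [hc]; linarith
    have : (0:ℚ) ≤ G.degree u := by positivity
    simp only [hF]; linarith
  -- the RHS as a double sum
  have hRHS : c ^ 2 * ((Fintype.card V : ℚ) * c / 2 - G.edgeFinset.card)
        + c * coM1 G + coM2 G
      = (∑ u, ∑ v, if Gᶜ.Adj u v then F u * F v else 0) / 2 := by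
    have hterm : ∀ u v : V, (if Gᶜ.Adj u v then F u * F v else 0)
        = c ^ 2 * (if Gᶜ.Adj u v then (1:ℚ) else 0)
          + c * (if Gᶜ.Adj u v then ((G.degree u : ℚ) + G.degree v) else 0)
          + (if Gᶜ.Adj u v then ((G.degree u : ℚ) * G.degree v) else 0) := by
      intro u v
      by_cases ha : Gᶜ.Adj u v <;> simp [ha, hF] <;> ring
    have hsplit : (∑ u, ∑ v, if Gᶜ.Adj u v then F u * F v else 0)
        = c ^ 2 * (∑ u, ∑ v, if Gᶜ.Adj u v then (1:ℚ) else 0)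
          + c * (∑ u, ∑ v, if Gᶜ.Adj u v then ((G.degree u : ℚ) + G.degree v) else 0)
          + (∑ u, ∑ v, if Gᶜ.Adj u v then ((G.degree u : ℚ) * G.degree v) else 0) := by
      simp only [hterm, Finset.sum_add_distrib, Finset.mul_sum]
    have hcount : (∑ u, ∑ v, if Gᶜ.Adj u v then (1:ℚ) else 0)
        = (Fintype.card V : ℚ) * c - 2 * G.edgeFinset.card := by
      have : ∀ u : V, (∑ v, if Gᶜ.Adj u v then (1:ℚ) else 0) = c - G.degree u := by
        intro u; rw [ite_adj_sum_eq, degree_compl_cast]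
      rw [Finset.sum_congr rfl fun u _ => this u, Finset.sum_sub_distrib]
      have hdeg : (∑ u : V, (G.degree u : ℚ)) = 2 * G.edgeFinset.card := by
        exact_mod_cast congrArg (Nat.cast (R := ℚ)) G.sum_degrees_eq_twice_card_edges
      rw [hdeg]
      simp [mul_comm]
    have hco1 : coM1 G = (∑ u, ∑ v, if Gᶜ.Adj u v then ((G.degree u : ℚ) + G.degree v) else 0) / 2 := by
      rw [coM1]
      congr 1
    have hco2 : coM2 G = (∑ u, ∑ v, if Gᶜ.Adj u v then ((G.degree u : ℚ) * G.degree v) else 0) / 2 := by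
      rw [coM2]
      congr 1
    rw [hsplit, hcount, hco1, hco2]
    ring
  rw [hRHS]
  have hPQ : ∀ u ∈ (univ : Finset V), ∀ v ∈ (univ : Finset V),
      (if Gᶜ.Adj u v then F u * F v else 0)
        ≤ (if Gᶜ.Adj u v then ((status Gᶜ u : ℚ) * status Gᶜ v) else 0) := by
    intro u _ v _
    by_cases ha : Gᶜ.Adj u v
    · simp only [if_pos ha]
      exact mul_le_mul (hkey u).1 (hkey v).1 (hF0 v) (Nat.cast_nonneg _)
    · simp [ha]
  have hPQ' : ∀ u ∈ (univ : Finset V),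
      (∑ v, if Gᶜ.Adj u v then F u * F v else 0)
        ≤ (∑ v, if Gᶜ.Adj u v then ((status Gᶜ u : ℚ) * status Gᶜ v) else 0) :=
    fun u hu => Finset.sum_le_sum (hPQ u hu)
  constructor
  · rw [ge_iff_le, S2, div_le_div_iff_of_pos_right (by norm_num : (0:ℚ) < 2)]
    exact Finset.sum_le_sum hPQ'
  · have hdiv : ∀ a b : ℚ, a / 2 = b / 2 ↔ a = b :=
      fun a b => ⟨fun h => by linarith, fun h => by rw [h]⟩
    rw [S2, hdiv]
    constructor
    · intro H
      have h1 := (Finset.sum_eq_sum_iff_of_le hPQ').1 H.symm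
      have h2 : ∀ u v : V, Gᶜ.Adj u v →
          F u * F v = (status Gᶜ u : ℚ) * status Gᶜ v := by
        intro u v ha
        have := (Finset.sum_eq_sum_iff_of_le (hPQ u (mem_univ u))).1 (h1 u (mem_univ u)) v (mem_univ v)
        simpa only [if_pos ha] using this
      intro u w
      by_cases huw : u = w
      · subst huw; simp [SimpleGraph.dist_self]
      · -- find a neighbor of u
        obtain ⟨p⟩ := hG.preconnected u w
        obtain ⟨v, ha⟩ : ∃ v, Gᶜ.Adj u v := by
          cases p with
          | nil => exact absurd rfl huw
          | cons h q => exact ⟨_, h⟩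
        have hcard : 1 < Fintype.card V := Fintype.one_lt_card_iff_nontrivial.2 ⟨u, w, huw⟩
        have hc1 : (1:ℚ) ≤ c := by
          have : (2:ℕ) ≤ Fintype.card V := hcard
          have : (2:ℚ) ≤ (Fintype.card V : ℚ) := by exact_mod_cast this
          rw [hc]; linarith
        have hFv : 0 < F v := by
          have : (0:ℚ) ≤ G.degree v := by positivity
          simp only [hF]; linarith
        have heq : F u = (status Gᶜ u : ℚ) := by
          by_contra hne'
          have hlt : F u < (status Gᶜ u : ℚ) := lt_of_le_of_ne (hkey u).1 hne'
          have : F u * F v < (status Gᶜ u : ℚ) * status Gᶜ v := by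
            calc F u * F v < (status Gᶜ u : ℚ) * F v := by
                  exact mul_lt_mul_of_pos_right hlt hFv
              _ ≤ (status Gᶜ u : ℚ) * status Gᶜ v := by
                  exact mul_le_mul_of_nonneg_left (hkey v).1 (Nat.cast_nonneg _)
          exact absurd (h2 u v ha) (ne_of_lt this)
        exact (hkey u).2.1 heq w
    · intro H
      have heq : ∀ u, F u = (status Gᶜ u : ℚ) := fun u => (hkey u).2.2 (H u)
      refine Finset.sum_congr rfl fun u _ => Finset.sum_congr rfl fun v _ => ?_
      by_cases ha : Gᶜ.Adj u v <;> simp [ha, heq u, heq v]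
end
end
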